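/- Let g, u_d ∈ ℓ²(ℤ^d∖{0};ℂ) and let φ : W° → ℝ be C², nonnegative, convex, and satisfy φ(s,α) → +∞ as (s,α) approaches any boundary point of W°. Then the reduced functional j(s,α) := (1/(2(2π)^d)) ‖S(s,α) − u_d‖² + φ(s,α) attains its minimum on W°: there exists (s̄,ᾱ) ∈ W° with j(s̄,ᾱ) ≤ j(s,α) for all (s,α) ∈ W°. -/

import Mathlib

/-!
The fidelity term `Σ_k ‖S(s,α)_k − u_d,k‖²` is dominated, uniformly in `(s, α)` with `α ≥ 0`,
by the summable sequence `2‖g_k‖² + 2‖u_d,k‖²` (since `0 ≤ α/(α+|k|^{2s}) ≤ 1`), so it is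
continuous on `W°`. Since it is nonnegative, `j ≥ φ` blows up at the boundary of `W°`; hence a
sublevel set `{j ≤ j(p₀)}`, `p₀ ∈ W°`, stays away from the boundary and is compact, and a
minimizer of `j` on it minimizes `j` on all of `W°`.
-/

open scoped BigOperators
open Filter

noncomputable section

/-- Index set `ℤ^d \ {0}` of nonzero frequencies. -/
abbrev K (d : ℕ) : Type := {k : Fin d → ℤ // k ≠ 0}

/-- Euclidean norm `|k|` of a frequency `k ∈ ℤ^d \ {0}`. -/
noncomputable def nrm {d : ℕ} (k : K d) : ℝ := Real.sqrt (∑ i : Fin d, ((k.1 i : ℝ)) ^ 2)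

/-- Squared fractional Sobolev seminorm `|u|_s² = Σ_k |k|^{2s} |u_k|²`. -/
noncomputable def HnormSq {d : ℕ} (s : ℝ) (u : K d → ℂ) : ℝ :=
  ∑' k : K d, nrm k ^ (2 * s) * ‖u k‖ ^ 2

/-- `u ∈ ℓ²`, i.e. `‖u‖ = |u|_0 < ∞`. -/
def MemL2 {d : ℕ} (u : K d → ℂ) : Prop := Summable fun k : K d => ‖u k‖ ^ 2

/-- `|u|_s < ∞`. -/
def MemHs {d : ℕ} (s : ℝ) (u : K d → ℂ) : Prop :=
  Summable fun k : K d => nrm k ^ (2 * s) * ‖u k‖ ^ 2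

open Topology

theorem ContinuousOn.exists_isMinOn_of_tendsto_atTop_frontier {X : Type*} [TopologicalSpace X]
    {U : Set X} {j : X → ℝ} (hU : IsCompact (closure U)) (hne : U.Nonempty)
    (hj : ContinuousOn j U) (hblow : ∀ p ∈ frontier U, Tendsto j (𝓝[U] p) atTop) :
    ∃ p ∈ U, IsMinOn j U p := by
  obtain ⟨p₀, hp₀⟩ := hne
  set S := U ∩ {p | j p ≤ j p₀}
  have hSU : S ⊆ U := Set.inter_subset_left
  have hSclosed : IsClosed S := by
    refine isClosed_of_closure_subset fun p hp => ?_
    have : (𝓝[S] p).NeBot := mem_closure_iff_nhdsWithin_neBot.mp hp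
    have hle : ∀ᶠ q in 𝓝[S] p, j q ≤ j p₀ :=
      eventually_nhdsWithin_of_forall fun q hq => hq.2
    have hpU : p ∈ U := by
      by_contra hpU
      have hfront : p ∈ frontier U :=
        ⟨closure_mono hSU hp, fun h => hpU (interior_subset h)⟩
      have hgt := ((hblow p hfront).eventually_gt_atTop (j p₀)).filter_mono
        (nhdsWithin_mono p hSU)
      obtain ⟨q, hq, hq'⟩ := (hgt.and hle).exists
      exact hq.not_ge hq'
    exact ⟨hpU, le_of_tendsto ((hj p hpU).mono hSU) hle⟩
  obtain ⟨p, hpS, hmin⟩ := (hU.of_isClosed_subset hSclosed (hSU.trans subset_closure)).exists_isMinOn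
    ⟨p₀, hp₀, le_refl (j p₀)⟩ (hj.mono hSU)
  refine ⟨p, hpS.1, fun q hq => ?_⟩
  by_cases hqS : j q ≤ j p₀
  · exact hmin ⟨hq, hqS⟩
  · exact hpS.2.trans (not_le.mp hqS).le

theorem one_le_nrm {d : ℕ} (k : K d) : 1 ≤ nrm k := by
  obtain ⟨i, hi⟩ : ∃ i, k.1 i ≠ 0 := Function.ne_iff.mp k.2
  have hi : (1 : ℝ) ≤ (k.1 i : ℝ) ^ 2 :=
    (one_le_sq_iff_one_le_abs _).mpr (by exact_mod_cast Int.one_le_abs hi)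
  exact Real.one_le_sqrt.mpr <|
    hi.trans (Finset.single_le_sum (fun j _ => sq_nonneg (k.1 j : ℝ)) (Finset.mem_univ i))

theorem nrm_pos {d : ℕ} (k : K d) : 0 < nrm k := one_pos.trans_le (one_le_nrm k)

/-- The solution `S(s,α)` of the denoising equation, at `p = (s, α)`. -/
def denoise {d : ℕ} (g : K d → ℂ) (p : ℝ × ℝ) (k : K d) : ℂ :=
  (p.2 : ℂ) * g k / ((p.2 + nrm k ^ (2 * p.1) : ℝ) : ℂ)

/-- The fidelity term `‖S(s,α) − u_d‖²`, without its normalising constant. -/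
def fidelity {d : ℕ} (g ud : K d → ℂ) (p : ℝ × ℝ) : ℝ :=
  ∑' k, ‖denoise g p k - ud k‖ ^ 2

theorem norm_denoise_le {d : ℕ} (g : K d → ℂ) {p : ℝ × ℝ} (hp : 0 ≤ p.2) (k : K d) :
    ‖denoise g p k‖ ≤ ‖g k‖ := by
  have hx : 0 ≤ nrm k ^ (2 * p.1) := Real.rpow_nonneg (nrm_pos k).le _
  have hfac : 0 ≤ p.2 / (p.2 + nrm k ^ (2 * p.1)) := div_nonneg hp (by linarith)
  have hfac' : p.2 / (p.2 + nrm k ^ (2 * p.1)) ≤ 1 := div_le_one_of_le₀ (by linarith) (by linarith)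
  have heq : denoise g p k = ((p.2 / (p.2 + nrm k ^ (2 * p.1)) : ℝ) : ℂ) * g k := by
    simp only [denoise]; push_cast; ring
  rw [heq, norm_mul, Complex.norm_real, Real.norm_of_nonneg hfac]
  exact mul_le_of_le_one_left (norm_nonneg _) hfac'

theorem norm_denoise_sub_sq_le {d : ℕ} (g ud : K d → ℂ) {p : ℝ × ℝ} (hp : 0 ≤ p.2) (k : K d) :
    ‖denoise g p k - ud k‖ ^ 2 ≤ 2 * (‖g k‖ ^ 2 + ‖ud k‖ ^ 2) :=
  calc ‖denoise g p k - ud k‖ ^ 2 ≤ (‖g k‖ + ‖ud k‖) ^ 2 := by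
        gcongr
        exact (norm_sub_le _ _).trans (add_le_add_left (norm_denoise_le g hp k) _)
    _ ≤ 2 * (‖g k‖ ^ 2 + ‖ud k‖ ^ 2) := add_sq_le

theorem continuousOn_denoise {d : ℕ} (g : K d → ℂ) (k : K d) :
    ContinuousOn (fun p => denoise g p k) {p : ℝ × ℝ | 0 ≤ p.2} := by
  have hden : Continuous fun p : ℝ × ℝ => p.2 + nrm k ^ (2 * p.1) :=
    continuous_snd.add <| continuous_const.rpow (continuous_const.mul continuous_fst)
      fun _ => Or.inl (nrm_pos k).ne'
  refine ((Complex.continuous_ofReal.comp continuous_snd).mul continuous_const).continuousOn.div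
    (Complex.continuous_ofReal.comp hden).continuousOn fun p hp => ?_
  have hx : 0 < nrm k ^ (2 * p.1) := Real.rpow_pos_of_pos (nrm_pos k) _
  exact Complex.ofReal_ne_zero.mpr (by simp only [Set.mem_ofPred_eq] at hp; positivity)

theorem continuousOn_fidelity {d : ℕ} {g ud : K d → ℂ} (hg : MemL2 g) (hud : MemL2 ud) :
    ContinuousOn (fidelity g ud) {p : ℝ × ℝ | 0 ≤ p.2} :=
  continuousOn_tsum (fun k => ((continuousOn_denoise g k).sub continuousOn_const).norm.pow 2)
    ((hg.add hud).mul_left 2) fun k p hp => by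
      rw [Real.norm_of_nonneg (sq_nonneg _)]
      exact norm_denoise_sub_sq_le g ud hp k

theorem fidelity_nonneg {d : ℕ} (g ud : K d → ℂ) (p : ℝ × ℝ) : 0 ≤ fidelity g ud p :=
  tsum_nonneg fun _ => sq_nonneg _

theorem stmt_5_general (d : ℕ) (g : K d → ℂ) (hg : MemL2 g)
    (ud : K d → ℂ) (hud : MemL2 ud)
    (s₀ s₁ α₀ α₁ : ℝ) (hs : s₀ < s₁) (hα₀ : 0 < α₀) (hα : α₀ < α₁)
    (W : Set (ℝ × ℝ)) (hW : W = Set.Ioo s₀ s₁ ×ˢ Set.Ioo α₀ α₁)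
    (φ : ℝ × ℝ → ℝ) (hφC2 : ContDiffOn ℝ 2 φ W)
    (hφblow : ∀ p ∈ frontier W, Tendsto φ (nhdsWithin p W) atTop)
    (j : ℝ × ℝ → ℝ)
    (hj : ∀ p ∈ W, j p = (1 / (2 * (2 * Real.pi) ^ d)) *
        (∑' k : K d, ‖(p.2 : ℂ) * g k / ((p.2 + nrm k ^ (2 * p.1) : ℝ) : ℂ) - ud k‖ ^ 2)
      + φ p) :
    ∃ p ∈ W, ∀ q ∈ W, j p ≤ j q := by
  have hj : ∀ p ∈ W, j p = 1 / (2 * (2 * Real.pi) ^ d) * fidelity g ud p + φ p := hj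
  have hWpos : W ⊆ {p | 0 ≤ p.2} := fun p hp => by
    rw [hW] at hp; exact hα₀.le.trans hp.2.1.le
  have hcompact : IsCompact (closure W) :=
    hW ▸ ((Metric.isBounded_Ioo s₀ s₁).prod (Metric.isBounded_Ioo α₀ α₁)).isCompact_closure
  have hne : W.Nonempty := hW ▸ (Set.nonempty_Ioo.mpr hs).prod (Set.nonempty_Ioo.mpr hα)
  have hjcont : ContinuousOn j W :=
    ((continuousOn_const.mul ((continuousOn_fidelity hg hud).mono hWpos)).add
      hφC2.continuousOn).congr hj
  have hφle : ∀ p ∈ W, φ p ≤ j p := fun p hp =>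
    (hj p hp).symm ▸ le_add_of_nonneg_left (mul_nonneg (by positivity) (fidelity_nonneg g ud p))
  obtain ⟨p, hpW, hmin⟩ := hjcont.exists_isMinOn_of_tendsto_atTop_frontier hcompact hne
    fun p hp => tendsto_atTop_mono' _ (eventually_nhdsWithin_of_forall hφle) (hφblow p hp)
  exact ⟨p, hpW, isMinOn_iff.mp hmin⟩

/-- existence of a minimizer of the reduced functional
`j(s,α) = (1/(2(2π)^d))‖S(s,α) − u_d‖² + φ(s,α)` on `W°`, where `φ` is C², nonnegative,
convex, and blows up at the boundary of `W°`. -/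
theorem stmt_5 (d : ℕ) (hd : 1 ≤ d) (g : K d → ℂ) (hg : MemL2 g)
    (ud : K d → ℂ) (hud : MemL2 ud)
    (s₀ s₁ α₀ α₁ : ℝ) (hs₀ : 0 < s₀) (hs : s₀ < s₁) (hα₀ : 0 < α₀) (hα : α₀ < α₁)
    (W : Set (ℝ × ℝ)) (hW : W = Set.Ioo s₀ s₁ ×ˢ Set.Ioo α₀ α₁)
    (φ : ℝ × ℝ → ℝ) (hφC2 : ContDiffOn ℝ 2 φ W) (hφ0 : ∀ p ∈ W, 0 ≤ φ p)
    (hφconv : ConvexOn ℝ W φ)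
    (hφblow : ∀ p ∈ frontier W, Tendsto φ (nhdsWithin p W) atTop)
    (j : ℝ × ℝ → ℝ)
    (hj : ∀ p ∈ W, j p = (1 / (2 * (2 * Real.pi) ^ d)) *
        (∑' k : K d, ‖(p.2 : ℂ) * g k / ((p.2 + nrm k ^ (2 * p.1) : ℝ) : ℂ) - ud k‖ ^ 2)
      + φ p) :
    ∃ p ∈ W, ∀ q ∈ W, j p ≤ j q :=
  stmt_5_general d g hg ud hud s₀ s₁ α₀ α₁ hs hα₀ hα W hW φ hφC2 hφblow j hj
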